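/- arXiv:2112.06557 — 3 statements merged into one kernel-verified Lean document; each statement's English description precedes it below -/
import Mathlib

section
/- The number of k-Dyck paths of length (k+1)N (paths with up-steps (1,k) and down-steps (1,-1), starting and ending at height 0, never going below the x-axis) equals the Fuss–Catalan number (1/(kN+1)) * binomial((k+1)N, N). -/
open Finset

/-- The value of a step: an up-step (`true`) adds `k`, a down-step (`false`) subtracts 1. -/
def stepVal (k : ℕ) (b : Bool) : ℤ := if b then (k : ℤ) else -1

/-- Height of the path `f` after its first `j` steps. -/
def pathHeight (k n : ℕ) (f : Fin n → Bool) (j : ℕ) : ℤ :=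
  ∑ i ∈ Finset.range j, if h : i < n then stepVal k (f ⟨i, h⟩) else 0

/-- A `k`-Dyck path of length `n`: stays weakly above the axis and ends at height 0. -/
def IsDyckPath (k n : ℕ) (f : Fin n → Bool) : Prop :=
  (∀ j ≤ n, 0 ≤ pathHeight k n f j) ∧ pathHeight k n f n = 0

instance (k n : ℕ) : DecidablePred (IsDyckPath k n) := fun f => by
  unfold IsDyckPath; infer_instance

/-- The finite set of all `k`-Dyck paths of length `n`. -/
def dyckPaths (k n : ℕ) : Finset (Fin n → Bool) :=
  Finset.univ.filter (IsDyckPath k n)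

open Fin.NatCast

namespace DyckAux

/-- Height after `j` steps of the periodic extension of `w`. -/
def hgt (k : ℕ) {m : ℕ} [NeZero m] (w : Fin m → Bool) (j : ℕ) : ℤ :=
  ∑ t ∈ Finset.range j, stepVal k (w (t : Fin m))

variable {k m : ℕ} [NeZero m] {w : Fin m → Bool}

lemma hgt_succ (j : ℕ) : hgt k w (j + 1) = hgt k w j + stepVal k (w (j : Fin m)) := by
  simp [hgt, Finset.sum_range_succ]

lemma hgt_m_add (j : ℕ) : hgt k w (m + j) = hgt k w m + hgt k w j := by
  induction j with
  | zero => simp [hgt]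
  | succ j ih =>
      have : ((m + j : ℕ) : Fin m) = (j : ℕ) := by push_cast; simp
      rw [← Nat.add_assoc, hgt_succ, ih, hgt_succ, this]; ring

lemma sum_stepVal {α : Type*} (k : ℕ) (s : Finset α) (g : α → Bool) :
    ∑ i ∈ s, stepVal k (g i) =
      (k + 1) * ((s.filter fun i => g i = true).card : ℤ) - s.card := by
  have h : ∀ b, stepVal k b = (k + 1) * (if b = true then (1 : ℤ) else 0) - 1 := by
    intro b; cases b <;> simp [stepVal]
  calc ∑ i ∈ s, stepVal k (g i)
      = ∑ i ∈ s, ((k + 1) * (if g i = true then (1 : ℤ) else 0) - 1) := by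
        exact Finset.sum_congr rfl fun i _ => h (g i)
    _ = (k + 1) * (∑ i ∈ s, if g i = true then (1 : ℤ) else 0) - s.card := by
        rw [Finset.sum_sub_distrib, Finset.mul_sum]; simp
    _ = _ := by rw [Finset.sum_boole]

lemma hgt_top :
    hgt k w m = (k + 1) * ((Finset.univ.filter fun i => w i = true).card : ℤ) - m := by
  rw [hgt, ← Fin.sum_univ_eq_sum_range (fun t => stepVal k (w (t : Fin m))) m]
  simp only [Fin.cast_val_eq_self]
  rw [sum_stepVal]
  simp

/-- Rotation of a word by `j` positions. -/
def rot (j : Fin m) (w : Fin m → Bool) : Fin m → Bool := fun i => w (i + j)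

lemma hgt_rot (j : Fin m) (i : ℕ) :
    hgt k (rot j w) i = hgt k w (j.val + i) - hgt k w j.val := by
  induction i with
  | zero => simp [hgt]
  | succ i ih =>
      rw [hgt_succ, ih, ← Nat.add_assoc, hgt_succ]
      have : ((j.val + i : ℕ) : Fin m) = (i : ℕ) + j := by
        push_cast
        rw [add_comm]
      rw [this, rot]
      ring

lemma card_filter_rot (j : Fin m) :
    (Finset.univ.filter fun i => rot j w i = true).card
      = (Finset.univ.filter fun i => w i = true).card := by
  refine Finset.card_bij' (fun i _ => i + j) (fun i _ => i - j) ?_ ?_ ?_ ?_ <;>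
    intro i hi <;>
    simp only [Finset.mem_filter, Finset.mem_univ, true_and] at hi ⊢ <;>
    simp_all [rot, sub_add_cancel]

/-- `j` is a good starting point. -/
def GoodAt (k : ℕ) {m : ℕ} [NeZero m] (w : Fin m → Bool) (j : ℕ) : Prop :=
  ∀ i < m, hgt k w j ≤ hgt k w (j + i)

lemma goodAt_asymm (hsum : hgt k w m = -1) {a b : ℕ} (hab : a < b) (hb : b < m)
    (ha' : GoodAt k w a) (hb' : GoodAt k w b) : False := by
  have h1 : hgt k w a ≤ hgt k w b := by
    have := ha' (b - a) (by omega)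
    rwa [show a + (b - a) = b by omega] at this
  have h2 : hgt k w b ≤ hgt k w (m + a) := by
    have := hb' (a + m - b) (by omega)
    rwa [show b + (a + m - b) = m + a by omega] at this
  rw [hgt_m_add, hsum] at h2
  omega

lemma exists_goodAt (hsum : hgt k w m = -1) : ∃ j < m, GoodAt k w j := by
  classical
  have hm : 0 < m := Nat.pos_of_ne_zero (NeZero.ne m)
  have hex : ∃ j, j < m ∧ ∀ i < m, hgt k w j ≤ hgt k w i := by
    obtain ⟨j, hj, hmin⟩ := Finset.exists_min_image (Finset.range m) (hgt k w)
      ⟨0, Finset.mem_range.2 hm⟩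
    exact ⟨j, Finset.mem_range.1 hj, fun i hi => hmin i (Finset.mem_range.2 hi)⟩
  let j := Nat.find hex
  obtain ⟨hjm, hjmin⟩ := Nat.find_spec hex
  have hstrict : ∀ i < j, hgt k w j < hgt k w i := by
    intro i hij
    have hi : i < m := lt_trans hij hjm
    have := Nat.find_min hex hij
    push_neg at this
    obtain ⟨i', hi', hlt⟩ := this hi
    exact lt_of_le_of_lt (hjmin i' hi') hlt
  refine ⟨j, hjm, fun i hi => ?_⟩
  by_cases hcase : j + i < m
  · exact hjmin (j + i) hcase
  · have hr : j + i - m < j := by omega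
    have := hstrict (j + i - m) hr
    set r := j + i - m with hrdef
    have heq : hgt k w (j + i) = hgt k w r - 1 := by
      rw [show j + i = m + r by omega, hgt_m_add, hsum]; ring
    omega

lemma card_goodRot (hsum : hgt k w m = -1) :
    (Finset.univ.filter fun j : Fin m => ∀ i < m, 0 ≤ hgt k (rot j w) i).card = 1 := by
  classical
  obtain ⟨j, hjm, hj⟩ := exists_goodAt hsum
  have key : ∀ j' : Fin m, (∀ i < m, 0 ≤ hgt k (rot j' w) i) ↔ GoodAt k w j'.val := by
    intro j'
    constructor
    · intro h i hi
      have := h i hi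
      rw [hgt_rot] at this
      omega
    · intro h i hi
      rw [hgt_rot]
      have := h i hi
      omega
  rw [Finset.card_eq_one]
  refine ⟨⟨j, hjm⟩, ?_⟩
  ext x
  simp only [Finset.mem_filter, Finset.mem_univ, true_and, Finset.mem_singleton, key]
  constructor
  · intro hx
    rcases lt_trichotomy x.val j with h | h | h
    · exact absurd (goodAt_asymm hsum h hjm hx hj) (by simp)
    · exact Fin.ext h
    · exact absurd (goodAt_asymm hsum h x.isLt hj hx) (by simp)
  · rintro rfl; exact hj

lemma card_bool_funs (N : ℕ) :
    (Finset.univ.filter fun w : Fin m → Bool =>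
      (Finset.univ.filter fun i => w i = true).card = N).card = m.choose N := by
  classical
  have hch : m.choose N = (Finset.powersetCard N (Finset.univ : Finset (Fin m))).card := by
    rw [Finset.card_powersetCard]; simp
  rw [hch]
  refine Finset.card_bij' (fun w _ => Finset.univ.filter fun i => w i = true)
    (fun s _ => fun i => decide (i ∈ s)) ?_ ?_ ?_ ?_
  · intro w hw
    simp only [Finset.mem_filter, Finset.mem_univ, true_and] at hw
    simp [Finset.mem_powersetCard, hw]
  · intro s hs
    simp only [Finset.mem_powersetCard] at hs
    simp only [Finset.mem_filter, Finset.mem_univ, true_and]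
    rw [show (Finset.univ.filter fun i => decide (i ∈ s) = true) = s by ext i; simp]
    exact hs.2
  · intro w hw
    funext i
    simp
  · intro s hs
    ext i
    simp

/-- Bridge between `pathHeight` and `hgt` on the extended word. -/
lemma bridge {k n : ℕ} (w : Fin (n + 1) → Bool) (f : Fin n → Bool)
    (hwf : ∀ t : Fin n, w t.castSucc = f t) {j : ℕ} (hj : j ≤ n) :
    pathHeight k n f j = hgt k w j := by
  unfold pathHeight hgt
  refine Finset.sum_congr rfl fun t ht => ?_
  have htn : t < n := lt_of_lt_of_le (Finset.mem_range.1 ht) hj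
  rw [dif_pos htn]
  have h1 : ((t : ℕ) : Fin (n + 1)) = (⟨t, htn⟩ : Fin n).castSucc := by
    ext
    simp [Fin.val_cast_of_lt (Nat.lt_succ_of_lt htn)]
  rw [h1, hwf]

/-- A good word ends with a down-step and reaches 0 just before it. -/
lemma good_last {k n : ℕ} (w : Fin (n + 1) → Bool)
    (hsum : hgt k w (n + 1) = -1) (hP : ∀ i < n + 1, 0 ≤ hgt k w i) :
    w ((n : ℕ) : Fin (n + 1)) = false ∧ hgt k w n = 0 := by
  have h1 : hgt k w (n + 1) = hgt k w n + stepVal k (w ((n : ℕ) : Fin (n + 1))) :=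
    hgt_succ n
  have h2 : 0 ≤ hgt k w n := hP n (by omega)
  cases hb : w ((n : ℕ) : Fin (n + 1)) with
  | false =>
      rw [hb] at h1
      simp only [stepVal, if_neg Bool.false_ne_true] at h1
      constructor
      · rfl
      · omega
  | true =>
      rw [hb] at h1
      simp only [stepVal, if_true] at h1
      exfalso
      have hk0 : (0 : ℤ) ≤ k := Int.natCast_nonneg k
      linarith

end DyckAux

open DyckAux in
lemma dyckPaths_card_mul (k N : ℕ) :
    (dyckPaths k ((k + 1) * N)).card * ((k + 1) * N + 1)
      = ((k + 1) * N + 1).choose N := by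
  classical
  set n := (k + 1) * N with hn
  -- the set of words of length n+1 with exactly N up-steps
  set A : Finset (Fin (n + 1) → Bool) :=
    Finset.univ.filter (fun w => (Finset.univ.filter fun i => w i = true).card = N) with hA
  have hAcard : A.card = (n + 1).choose N := card_bool_funs N
  -- every word in A has total height -1
  have hsum : ∀ w ∈ A, hgt k w (n + 1) = -1 := by
    intro w hw
    rw [hA, Finset.mem_filter] at hw
    rw [hgt_top, hw.2]
    have : ((n : ℤ) + 1) = (k + 1) * N + 1 := by rw [hn]; push_cast; ring
    push_cast
    push_cast at this
    linarith
  -- the set of good words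
  set B : Finset (Fin (n + 1) → Bool) :=
    A.filter (fun w => ∀ i < n + 1, 0 ≤ hgt k w i) with hB
  -- double counting
  have hcount : (n + 1).choose N = (n + 1) * B.card := by
    calc (n + 1).choose N = A.card := hAcard.symm
      _ = ∑ w ∈ A, (Finset.univ.filter
            fun j : Fin (n + 1) => ∀ i < n + 1, 0 ≤ hgt k (rot j w) i).card := by
          rw [Finset.sum_congr rfl fun w hw => card_goodRot (hsum w hw)]
          simp
      _ = ∑ w ∈ A, ∑ j : Fin (n + 1),
            (if ∀ i < n + 1, 0 ≤ hgt k (rot j w) i then 1 else 0) := by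
          refine Finset.sum_congr rfl fun w _ => ?_
          rw [Finset.card_filter]
      _ = ∑ j : Fin (n + 1), ∑ w ∈ A,
            (if ∀ i < n + 1, 0 ≤ hgt k (rot j w) i then 1 else 0) := Finset.sum_comm
      _ = ∑ j : Fin (n + 1), ∑ w ∈ A,
            (if ∀ i < n + 1, 0 ≤ hgt k w i then 1 else 0) := by
          refine Finset.sum_congr rfl fun j _ => ?_
          refine Finset.sum_nbij' (fun w => rot j w) (fun w => rot (-j) w)
            ?_ ?_ ?_ ?_ ?_
          · intro w hw
            rw [hA, Finset.mem_filter] at hw ⊢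
            exact ⟨Finset.mem_univ _, by rw [card_filter_rot]; exact hw.2⟩
          · intro w hw
            rw [hA, Finset.mem_filter] at hw ⊢
            exact ⟨Finset.mem_univ _, by rw [card_filter_rot]; exact hw.2⟩
          · intro w _
            funext i
            simp [rot, sub_eq_add_neg]
          · intro w _
            funext i
            simp [rot, sub_eq_add_neg]
          · intro w _
            rfl
      _ = ∑ j : Fin (n + 1), B.card := by
          refine Finset.sum_congr rfl fun j _ => ?_
          rw [hB, Finset.card_filter]
      _ = (n + 1) * B.card := by
          rw [Finset.sum_const, Finset.card_univ, Fintype.card_fin, smul_eq_mul]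
  -- B is in bijection with Dyck paths
  have hBD : B.card = (dyckPaths k n).card := by
    refine Finset.card_bij' (fun w _ => fun i : Fin n => w i.castSucc)
      (fun f _ => fun i : Fin (n + 1) => if h : i.val < n then f ⟨i.val, h⟩ else false)
      ?_ ?_ ?_ ?_
    · -- good word restricts to a Dyck path
      intro w hw
      have hwA : w ∈ A := Finset.mem_of_mem_filter _ hw
      have hwP : ∀ i < n + 1, 0 ≤ hgt k w i := by
        rw [hB, Finset.mem_filter] at hw
        exact hw.2
      obtain ⟨hlast, hzero⟩ := good_last w (hsum w hwA) hwP
      have hbr : ∀ j ≤ n, pathHeight k n (fun i : Fin n => w i.castSucc) j = hgt k w j :=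
        fun j hj => bridge w _ (fun t => rfl) hj
      rw [dyckPaths, Finset.mem_filter]
      refine ⟨Finset.mem_univ _, ?_, ?_⟩
      · intro j hj
        rw [hbr j hj]
        exact hwP j (by omega)
      · rw [hbr n le_rfl, hzero]
    · -- a Dyck path extends to a good word
      intro f hf
      rw [dyckPaths, Finset.mem_filter] at hf
      obtain ⟨-, hpos, hend⟩ := hf
      set w : Fin (n + 1) → Bool :=
        fun i => if h : i.val < n then f ⟨i.val, h⟩ else false with hwdef
      have hbr : ∀ j ≤ n, pathHeight k n f j = hgt k w j := by
        intro j hj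
        refine bridge w f (fun t => ?_) hj
        simp [hwdef, Fin.castSucc]
      have hlastval : ((n : ℕ) : Fin (n + 1)) = ⟨n, by omega⟩ := by
        ext
        simp [Fin.val_cast_of_lt (Nat.lt_succ_self n)]
      have hwn : w ((n : ℕ) : Fin (n + 1)) = false := by
        rw [hlastval, hwdef]
        simp
      have htot : hgt k w (n + 1) = -1 := by
        rw [hgt_succ, ← hbr n le_rfl, hend, hwn]
        simp [stepVal]
      -- exactly N up-steps
      have hcnt : (Finset.univ.filter fun i => w i = true).card = N := by
        have h1 := hgt_top (k := k) (m := n + 1) (w := w)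
        rw [htot] at h1
        set c := (Finset.univ.filter fun i => w i = true).card with hc
        have h2 : ((k : ℤ) + 1) * c = ((k : ℤ) + 1) * N := by
          have hnn : ((n : ℤ) + 1) = (k + 1) * N + 1 := by rw [hn]; push_cast; ring
          push_cast at h1 hnn ⊢
          linarith
        have h3 : (c : ℤ) = N := by
          have hk1 : ((k : ℤ) + 1) ≠ 0 := by positivity
          exact mul_left_cancel₀ hk1 h2
        exact_mod_cast h3
      rw [hB, Finset.mem_filter, hA, Finset.mem_filter]
      refine ⟨⟨Finset.mem_univ _, hcnt⟩, ?_⟩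
      intro i hi
      rw [← hbr i (by omega)]
      exact hpos i (by omega)
    · -- right inverse
      intro w hw
      have hwA : w ∈ A := Finset.mem_of_mem_filter _ hw
      have hwP : ∀ i < n + 1, 0 ≤ hgt k w i := by
        rw [hB, Finset.mem_filter] at hw
        exact hw.2
      obtain ⟨hlast, -⟩ := good_last w (hsum w hwA) hwP
      funext i
      dsimp only
      by_cases h : i.val < n
      · rw [dif_pos h]
        congr 1
      · rw [dif_neg h]
        have : i = ((n : ℕ) : Fin (n + 1)) := by
          ext
          rw [Fin.val_cast_of_lt (Nat.lt_succ_self n)]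
          omega
        rw [this, hlast]
    · -- left inverse
      intro f hf
      funext i
      dsimp only
      rw [dif_pos (show (i.castSucc).val < n from i.isLt)]
      congr 1
  -- conclude
  rw [hcount, hBD, Nat.mul_comm]

theorem dyckPaths_card (k N : ℕ) (hk : 1 ≤ k) :
    ((dyckPaths k ((k + 1) * N)).card : ℚ) =
      (((k + 1) * N).choose N : ℚ) / (k * N + 1) := by
  have hmul := dyckPaths_card_mul k N
  -- the binomial identity
  have hid : ((k + 1) * N + 1) * (((k + 1) * N).choose N)
      = (((k + 1) * N + 1).choose N) * (k * N + 1) := by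
    have h1 := Nat.add_one_mul_choose_eq ((k + 1) * N) (k * N)
    have h2 : ((k + 1) * N).choose (k * N) = ((k + 1) * N).choose N := by
      have := Nat.choose_symm (show k * N ≤ (k + 1) * N by nlinarith)
      rw [show (k + 1) * N - k * N = N by ring_nf; omega] at this
      exact this.symm
    have h3 : ((k + 1) * N + 1).choose (k * N + 1) = ((k + 1) * N + 1).choose N := by
      have := Nat.choose_symm (show k * N + 1 ≤ (k + 1) * N + 1 by nlinarith)
      rw [show (k + 1) * N + 1 - (k * N + 1) = N by ring_nf; omega] at this
      exact this.symm
    rw [h2, h3] at h1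
    simpa [Nat.succ_eq_add_one] using h1
  have hden : ((k : ℚ) * N + 1) ≠ 0 := by positivity
  have hden2 : (((k : ℚ) + 1) * N + 1) ≠ 0 := by positivity
  rw [eq_div_iff hden]
  -- cast everything to ℚ
  have hmulQ : ((dyckPaths k ((k + 1) * N)).card : ℚ) * (((k : ℚ) + 1) * N + 1)
      = (((k + 1) * N + 1).choose N : ℚ) := by
    exact_mod_cast congrArg (fun x : ℕ => (x : ℚ)) hmul
  have hidQ : (((k : ℚ) + 1) * N + 1) * (((k + 1) * N).choose N : ℚ)
      = ((((k + 1) * N + 1).choose N : ℕ) : ℚ) * ((k : ℚ) * N + 1) := by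
    exact_mod_cast congrArg (fun x : ℕ => (x : ℚ)) hid
  have := hmulQ
  apply mul_left_cancel₀ hden2
  calc (((k : ℚ) + 1) * N + 1) * ((dyckPaths k ((k + 1) * N)).card * ((k : ℚ) * N + 1))
      = ((dyckPaths k ((k + 1) * N)).card * (((k : ℚ) + 1) * N + 1)) * ((k : ℚ) * N + 1) := by
        ring
    _ = (((k + 1) * N + 1).choose N : ℚ) * ((k : ℚ) * N + 1) := by rw [hmulQ]
    _ = (((k : ℚ) + 1) * N + 1) * (((k + 1) * N).choose N : ℚ) := hidQ.symm
end

section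
/- Let û(z) be the unique formal power series with û(0)=0 satisfying û = z + z·û^(k+1). Then as formal Laurent series, û^(−k) = z^(−k) − z · Σ_{λ≥0} (k/(λ+1)) · binomial((k+1)λ, λ) · z^((k+1)λ). -/
/-!
Write `u = X v`. Then `v = 1 + X^(k+1) v^(k+1)` and `u^(-k) = X^(-k) v^(-k)`. The Euler
derivative `X d/dX` of this equation gives `((k+1) - k v) · X v' = (k+1) v (v - 1)`, hence a
two-term recurrence in the exponent between the coefficients of `v^j` and `v^(j+1)`. Together with
`v = 1 + X^(k+1) v^(k+1)` and `v⁻¹ = 1 - X^(k+1) v^k`, which express the coefficients of `v^(±1)`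
through earlier coefficients of `v^(k+1)` and `v^k`, it determines `[X^n] v^j` for
`-k ≤ j ≤ k+1`, `j ≠ 0`, by induction on `n`. Lambert's formula for the powers of
`B = 1 + t B^(k+1)` satisfies the same relations; at `j = -k` it is the claimed expansion.
-/

open PowerSeries

namespace Derivation

variable {R A M : Type*} [CommRing R] [CommRing A] [Algebra R A] [AddCommGroup M]
  [Module A M] [Module R M]

theorem leibniz_units_zpow (D : Derivation R A M) (u : Aˣ) (n : ℤ) :
    D ↑(u ^ n) = n • (↑(u ^ (n - 1)) : A) • D ↑u := by
  cases n with
  | ofNat m =>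
    cases m with
    | zero => simp
    | succ m =>
      rw [Int.ofNat_eq_natCast, show ((m + 1 : ℕ) : ℤ) - 1 = m by omega, zpow_natCast,
        zpow_natCast, Units.val_pow_eq_pow_val, Units.val_pow_eq_pow_val, leibniz_pow,
        natCast_zsmul, Nat.add_sub_cancel]
  | negSucc m =>
    rw [show Int.negSucc m - 1 = Int.negSucc (m + 1) from rfl, zpow_negSucc, zpow_negSucc,
      ← inv_pow, ← inv_pow, Units.val_pow_eq_pow_val, Units.val_pow_eq_pow_val, leibniz_pow,
      D.leibniz_of_mul_eq_one u.inv_mul, Nat.add_sub_cancel, neg_smul, smul_neg, smul_smul,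
      ← pow_add, Int.negSucc_eq, neg_smul, ← Nat.cast_succ, natCast_zsmul, smul_neg]

end Derivation

namespace PowerSeries

section Euler

variable {R : Type*} [CommRing R]

noncomputable def eulerDerivation : Derivation R R⟦X⟧ R⟦X⟧ := (X : R⟦X⟧) • derivative R

theorem eulerDerivation_apply (f : R⟦X⟧) : eulerDerivation f = X * d⁄dX R f := rfl

theorem eulerDerivation_X : eulerDerivation (X : R⟦X⟧) = X := by
  rw [eulerDerivation_apply, derivative_X, mul_one]

theorem coeff_eulerDerivation (f : R⟦X⟧) (n : ℕ) :
    coeff n (eulerDerivation f) = n * coeff n f := by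
  cases n with
  | zero => simp [eulerDerivation_apply]
  | succ n => rw [eulerDerivation_apply, coeff_succ_X_mul, coeff_derivative]; push_cast; ring

end Euler

section FixedPoint

variable {R : Type*} [CommRing R] {k : ℕ}

theorem eulerDerivation_of_eq_one_add {v : R⟦X⟧} (hv : v = 1 + X ^ (k + 1) * v ^ (k + 1)) :
    ((k + 1 : R⟦X⟧) - k * v) * eulerDerivation v = (k + 1) * v * (v - 1) := by
  have hE : eulerDerivation v = (k + 1 : R⟦X⟧) * X ^ (k + 1) * v ^ k * eulerDerivation v
      + (k + 1 : R⟦X⟧) * X ^ (k + 1) * v ^ (k + 1) := by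
    conv_lhs => rw [hv]
    rw [map_add, Derivation.map_one_eq_zero, zero_add, Derivation.leibniz,
      Derivation.leibniz_pow, Derivation.leibniz_pow, eulerDerivation_X]
    simp only [smul_eq_mul, nsmul_eq_mul, Nat.add_sub_cancel]
    push_cast
    ring
  linear_combination v * hE - ((k + 1) * (eulerDerivation v + v)) * hv

variable {V : R⟦X⟧ˣ} (hV : (V : R⟦X⟧) = 1 + X ^ (k + 1) * (V : R⟦X⟧) ^ (k + 1))
include hV

theorem eulerDerivation_zpow_succ (j : ℤ) :
    (k + 1) * (j + 1) * eulerDerivation (↑(V ^ j) : R⟦X⟧)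
      - k * j * eulerDerivation (↑(V ^ (j + 1)) : R⟦X⟧)
      = (k + 1) * j * (j + 1) * (↑(V ^ (j + 1)) - ↑(V ^ j)) := by
  have hsucc : ∀ i : ℤ, (↑(V ^ (i + 1)) : R⟦X⟧) = ↑(V ^ i) * V := fun i => by
    rw [zpow_add_one, Units.val_mul]
  rw [Derivation.leibniz_units_zpow, Derivation.leibniz_units_zpow, add_sub_cancel_right,
    hsucc j, show j = j - 1 + 1 by ring, hsucc (j - 1), sub_add_cancel]
  simp only [zsmul_eq_mul, smul_eq_mul]
  push_cast
  linear_combination (j * (j + 1) * (↑(V ^ (j - 1)) : R⟦X⟧)) *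
    eulerDerivation_of_eq_one_add hV

theorem coeff_zpow_succ_recurrence (j : ℤ) (n : ℕ) :
    j * (k * n + (k + 1) * (j + 1)) * coeff n (↑(V ^ (j + 1)) : R⟦X⟧)
      = (k + 1) * (j + 1) * (n + j) * coeff n (↑(V ^ j) : R⟦X⟧) := by
  have h := congrArg (coeff n) (eulerDerivation_zpow_succ hV j)
  simp only [← map_natCast (C (R := R)), ← map_intCast (C (R := R)), ← map_one (C (R := R)),
    ← map_add, ← map_mul, map_sub, coeff_C_mul, coeff_eulerDerivation] at h
  linear_combination -h

theorem coeff_add_succ_eq_coeff_zpow_succ (n : ℕ) :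
    coeff (n + (k + 1)) (↑V : R⟦X⟧) = coeff n (↑(V ^ ((k : ℤ) + 1)) : R⟦X⟧) := by
  rw [show (k : ℤ) + 1 = ((k + 1 : ℕ) : ℤ) by push_cast; rfl, zpow_natCast,
    Units.val_pow_eq_pow_val]
  conv_lhs => rw [hV]
  rw [map_add, coeff_one, if_neg (by omega), coeff_X_pow_mul, zero_add]

theorem coeff_zpow_neg_one_add_succ (n : ℕ) :
    coeff (n + (k + 1)) (↑(V ^ (-1 : ℤ)) : R⟦X⟧) = -coeff n (↑(V ^ (k : ℤ)) : R⟦X⟧) := by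
  have hinv : (↑(V ^ (-1 : ℤ)) : R⟦X⟧) = 1 - X ^ (k + 1) * (V : R⟦X⟧) ^ k := by
    rw [zpow_neg_one, Units.inv_eq_of_mul_eq_one_left]
    linear_combination hV
  rw [hinv, zpow_natCast, Units.val_pow_eq_pow_val, map_sub, coeff_one, if_neg (by omega),
    coeff_X_pow_mul, zero_sub]

theorem X_pow_dvd_zpow_sub_one (j : ℤ) : X ^ (k + 1) ∣ (↑(V ^ j) : R⟦X⟧) - 1 := by
  have hV1 : X ^ (k + 1) ∣ (V : R⟦X⟧) - 1 := ⟨_, by rw [hV, add_sub_cancel_left]⟩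
  induction j using Int.induction_on with
  | zero => simp
  | succ i ih =>
    rw [zpow_add_one, Units.val_mul]
    convert (dvd_mul_of_dvd_left ih (V : R⟦X⟧)).add hV1 using 1
    ring
  | pred i ih =>
    rw [← sub_add_cancel (-(i : ℤ)) 1, zpow_add_one, Units.val_mul] at ih
    convert ih.sub (dvd_mul_of_dvd_right hV1 (↑(V ^ (-(i : ℤ) - 1)) : R⟦X⟧)) using 1
    ring

end FixedPoint

end PowerSeries

/-- The relations satisfied by `c j n = [X^n] v^j` when `v = 1 + X^(k+1) v^(k+1)`. -/
structure IsPowerCoeffTable {R : Type*} [CommRing R] (k : ℕ) (c : ℤ → ℕ → R) : Prop where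
  step : ∀ j : ℤ, -(k : ℤ) ≤ j → ∀ n : ℕ,
    j * (k * n + (k + 1) * (j + 1)) * c (j + 1) n = (k + 1) * (j + 1) * (n + j) * c j n
  one_add : ∀ n, c 1 (n + (k + 1)) = c (k + 1) n
  neg_one_add : ∀ n, c (-1) (n + (k + 1)) = -c k n
  low : ∀ j : ℤ, j ≠ 0 → ∀ n ≤ k, c j n = if n = 0 then 1 else 0

theorem PowerSeries.isPowerCoeffTable_coeff_zpow {R : Type*} [CommRing R] {k : ℕ}
    {V : R⟦X⟧ˣ} (hV : (V : R⟦X⟧) = 1 + X ^ (k + 1) * (V : R⟦X⟧) ^ (k + 1)) :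
    IsPowerCoeffTable k fun j n => coeff n (↑(V ^ j) : R⟦X⟧) where
  step j _ n := coeff_zpow_succ_recurrence hV j n
  one_add n := by simpa using coeff_add_succ_eq_coeff_zpow_succ hV n
  neg_one_add := coeff_zpow_neg_one_add_succ hV
  low j _ n hn := by
    rw [← coeff_one, ← sub_eq_zero, ← map_sub]
    exact X_pow_dvd_iff.mp (X_pow_dvd_zpow_sub_one hV j) n (by omega)

namespace IsPowerCoeffTable

variable {R : Type*} [CommRing R] [IsDomain R] [CharZero R] {k : ℕ} {c g : ℤ → ℕ → R}

theorem apply_eq (hc : IsPowerCoeffTable k c) (hg : IsPowerCoeffTable k g) (n : ℕ) {j : ℤ}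
    (hj : j ≠ 0) (hlo : -(k : ℤ) ≤ j) (hhi : j ≤ k + 1) : c j n = g j n := by
  induction n using Nat.strong_induction_on generalizing j with
  | _ n ih =>
  by_cases hn : n ≤ k
  · rw [hc.low j hj n hn, hg.low j hj n hn]
  obtain ⟨m, rfl⟩ : ∃ m, n = m + (k + 1) := ⟨n - (k + 1), by omega⟩
  have hm : m < m + (k + 1) := by omega
  rcases hj.lt_or_gt with hneg | hpos
  · induction j, (show j ≤ -1 by omega) using Int.leInductionDown with
    | base =>
      rw [hc.neg_one_add, hg.neg_one_add, ih m hm (by omega) (by omega) (by omega)]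
    | pred i hi ihi =>
      have hc' := hc.step (i - 1) hlo (m + (k + 1))
      have hg' := hg.step (i - 1) hlo (m + (k + 1))
      rw [sub_add_cancel, ihi (by omega) (by omega) (by omega) (by omega)] at hc'
      rw [sub_add_cancel] at hg'
      refine mul_left_cancel₀ ?_ (hc'.symm.trans hg')
      have : ((k + 1) * (i - 1 + 1) * ((m + (k + 1) : ℕ) + (i - 1)) : ℤ) ≠ 0 :=
        mul_ne_zero (mul_ne_zero (by omega) (by omega)) (by omega)
      exact_mod_cast this
  · induction j, (show 1 ≤ j by omega) using Int.leInduction with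
    | base =>
      rw [hc.one_add, hg.one_add, ih m hm (by omega) (by omega) le_rfl]
    | succ i hi ihi =>
      have hc' := hc.step i (by omega) (m + (k + 1))
      have hg' := hg.step i (by omega) (m + (k + 1))
      rw [ihi (by omega) (by omega) (by omega) (by omega), ← hg'] at hc'
      refine mul_left_cancel₀ ?_ hc'
      have : (0 : ℤ) < i * (k * (m + (k + 1) : ℕ) + (k + 1) * (i + 1)) :=
        mul_pos (by omega) (by nlinarith)
      exact_mod_cast this.ne'

end IsPowerCoeffTable

section Lambert

variable {K : Type*} [Field K] {k : ℕ} {j : ℤ}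

/-- Lambert's formula for `[t^l] B(t)^j`, where `B = 1 + t B^(k+1)`. -/
noncomputable def lambertCoeff (K : Type*) [Field K] (k : ℕ) (j : ℤ) (l : ℕ) : K :=
  j / ((k + 1) * l + j : ℤ) * (Ring.choose ((k + 1) * l + j : ℤ) l : ℤ)

theorem lambertCoeff_of_eq {l N : ℕ} (h : ((k : ℤ) + 1) * l + j = N) :
    lambertCoeff K k j l = j / N * N.choose l := by
  rw [lambertCoeff, h, Ring.choose_natCast]
  push_cast
  rfl

theorem lambertCoeff_zero_right [CharZero K] (hj : j ≠ 0) : lambertCoeff K k j 0 = 1 := by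
  simp [lambertCoeff, hj]

theorem lambertCoeff_one_succ [CharZero K] (l : ℕ) :
    lambertCoeff K k 1 (l + 1) = lambertCoeff K k (k + 1) l := by
  set M := (k + 1) * (l + 1) with hM
  rw [lambertCoeff_of_eq (l := l + 1) (N := M + 1) (by push_cast [hM]; ring),
    lambertCoeff_of_eq (N := M) (by push_cast [hM]; ring)]
  have key : ((M + 1 : ℕ) : K) * M.choose l = (M + 1).choose (l + 1) * (l + 1) := by
    exact_mod_cast Nat.add_one_mul_choose_eq M l
  have hMK : (M : K) = (k + 1) * (l + 1) := by push_cast [hM]; ring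
  have hM0 : (M : K) ≠ 0 := by
    rw [hMK]; exact mul_ne_zero k.cast_add_one_ne_zero l.cast_add_one_ne_zero
  have hM1 : ((M + 1 : ℕ) : K) ≠ 0 := Nat.cast_ne_zero.mpr M.succ_ne_zero
  rw [div_mul_eq_mul_div, div_mul_eq_mul_div, div_eq_div_iff hM1 hM0]
  push_cast at key ⊢
  linear_combination (((M + 1).choose (l + 1) : ℕ) : K) * hMK - ((k : K) + 1) * key

theorem lambertCoeff_neg_one_succ [CharZero K] (l : ℕ) :
    lambertCoeff K k (-1) (l + 1) = -lambertCoeff K k k l := by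
  set M := (k + 1) * l + k with hM
  rw [lambertCoeff_of_eq (N := M) (by push_cast [hM]; ring),
    lambertCoeff_of_eq (N := M) (by push_cast [hM]; ring)]
  have key : M.choose (l + 1) = k * M.choose l := by
    have h := Nat.choose_succ_right_eq M l
    rw [Nat.sub_eq_of_eq_add (show M = k * (l + 1) + l by rw [hM]; ring)] at h
    exact Nat.eq_of_mul_eq_mul_right (show 0 < l + 1 by omega) (by rw [h]; ring)
  rw [key]
  push_cast
  ring

theorem lambertCoeff_neg_self_succ [CharZero K] (l : ℕ) :
    lambertCoeff K k (-k) (l + 1) = -((k : K) / (l + 1) * ((k + 1) * l).choose l) := by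
  set P := (k + 1) * l with hP
  rw [lambertCoeff_of_eq (N := P + 1) (by push_cast [hP]; ring)]
  have key : ((P + 1 : ℕ) : K) * P.choose l = (P + 1).choose (l + 1) * (l + 1) := by
    exact_mod_cast Nat.add_one_mul_choose_eq P l
  have hP1 : ((P + 1 : ℕ) : K) ≠ 0 := Nat.cast_ne_zero.mpr P.succ_ne_zero
  rw [div_mul_eq_mul_div, div_mul_eq_mul_div, ← neg_div, div_eq_div_iff hP1 l.cast_add_one_ne_zero]
  push_cast at key ⊢
  linear_combination (k : K) * key

theorem lambertCoeff_succ_exponent [CharZero K] (hj : -(k : ℤ) ≤ j) (l : ℕ) :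
    j * (k * ((k + 1) * l : ℕ) + (k + 1) * (j + 1)) * lambertCoeff K k (j + 1) l
      = (k + 1) * (j + 1) * (((k + 1) * l : ℕ) + j) * lambertCoeff K k j l := by
  rcases l.eq_zero_or_pos with rfl | hl
  · have hself (i : ℤ) : (i : K) * lambertCoeff K k i 0 = i := by
      rcases eq_or_ne i 0 with rfl | hi
      · rw [Int.cast_zero, zero_mul]
      · rw [lambertCoeff_zero_right hi, mul_one]
    have hsucc := hself (j + 1)
    push_cast at hsucc ⊢
    linear_combination (j * (k + 1) : K) * hsucc - ((k + 1) * (j + 1) : K) * hself j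
  obtain ⟨N, hN⟩ : ∃ N : ℕ, ((k : ℤ) + 1) * l + j = N :=
    ⟨_, (Int.toNat_of_nonneg (by nlinarith)).symm⟩
  have hlN : l ≤ N := by nlinarith
  rw [lambertCoeff_of_eq hN,
    lambertCoeff_of_eq (N := N + 1) (by rw [← add_assoc, hN]; push_cast; ring)]
  have key : ((N.choose l * (N + 1) : ℕ) : K) = ((N + 1).choose l * (N + 1 - l) : ℕ) := by
    rw [Nat.choose_mul_succ_eq]
  have hNK : ((k : K) + 1) * l + j = N := by exact_mod_cast hN
  have hN0 : (N : K) ≠ 0 := Nat.cast_ne_zero.mpr (by omega)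
  have hN1 : ((N + 1 : ℕ) : K) ≠ 0 := Nat.cast_ne_zero.mpr N.succ_ne_zero
  push_cast [Nat.cast_sub (show l ≤ N + 1 by omega)] at key hN1 ⊢
  field_simp
  linear_combination (-(j * (j + 1) * N) : K) * key
    + ((j : K) * (j + 1) * (N * (N + 1).choose l - (N + 1) * N.choose l)) * hNK

noncomputable def lambertTable (K : Type*) [Field K] (k : ℕ) (j : ℤ) (n : ℕ) : K :=
  if k + 1 ∣ n then lambertCoeff K k j (n / (k + 1)) else 0

theorem lambertTable_mul (l : ℕ) : lambertTable K k j ((k + 1) * l) = lambertCoeff K k j l := by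
  rw [lambertTable, if_pos (dvd_mul_right _ _), Nat.mul_div_cancel_left _ k.succ_pos]

theorem lambertTable_of_not_dvd {n : ℕ} (hn : ¬k + 1 ∣ n) : lambertTable K k j n = 0 :=
  if_neg hn

theorem isPowerCoeffTable_lambertTable [CharZero K] : IsPowerCoeffTable k (lambertTable K k) where
  step j hj n := by
    by_cases hn : k + 1 ∣ n
    · obtain ⟨l, rfl⟩ := hn
      rw [lambertTable_mul, lambertTable_mul, lambertCoeff_succ_exponent hj]
    · rw [lambertTable_of_not_dvd hn, lambertTable_of_not_dvd hn, mul_zero, mul_zero]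
  one_add n := by
    by_cases hn : k + 1 ∣ n
    · obtain ⟨l, rfl⟩ := hn
      rw [← mul_add_one, lambertTable_mul, lambertTable_mul, lambertCoeff_one_succ]
    · rw [lambertTable_of_not_dvd hn, lambertTable_of_not_dvd (by simpa using hn)]
  neg_one_add n := by
    by_cases hn : k + 1 ∣ n
    · obtain ⟨l, rfl⟩ := hn
      rw [← mul_add_one, lambertTable_mul, lambertTable_mul, lambertCoeff_neg_one_succ]
    · rw [lambertTable_of_not_dvd hn, lambertTable_of_not_dvd (by simpa using hn), neg_zero]
  low j hj n hn := by
    rcases n.eq_zero_or_pos with rfl | hpos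
    · rw [← mul_zero (k + 1), lambertTable_mul, lambertCoeff_zero_right hj, if_pos rfl]
    · rw [lambertTable_of_not_dvd (Nat.not_dvd_of_pos_of_lt hpos (by omega)), if_neg (by omega)]

end Lambert

theorem LaurentSeries.coe_X_mul_units_zpow {F : Type*} [Field F] (V : F⟦X⟧ˣ) (j : ℤ) :
    ((X * (V : F⟦X⟧) : F⟦X⟧) : LaurentSeries F) ^ j
      = HahnSeries.single j 1 * ((↑(V ^ j) : F⟦X⟧) : LaurentSeries F) := by
  rw [PowerSeries.coe_mul, PowerSeries.coe_X, mul_zpow, ← RatFunc.single_zpow]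
  congr 1
  exact (map_zpow ((HahnSeries.ofPowerSeries ℤ F : F⟦X⟧ →* LaurentSeries F).comp
    (Units.coeHom _)) V j).symm

theorem coeff_zpow_of_eq_X_add_X_mul_pow {K : Type*} [Field K] [CharZero K] {k : ℕ}
    {u : K⟦X⟧} (hu : u = X + X * u ^ (k + 1)) {j : ℤ} (hj : j ≠ 0) (hlo : -(k : ℤ) ≤ j)
    (hhi : j ≤ k + 1) (d : ℤ) :
    ((u : LaurentSeries K) ^ j).coeff d
      = if d - j < 0 then 0 else lambertTable K k j (d - j).natAbs := by
  have huv : u = X * (1 + u ^ (k + 1)) := by rw [mul_add, mul_one]; exact hu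
  set v := 1 + u ^ (k + 1)
  have hv : v = 1 + X ^ (k + 1) * v ^ (k + 1) := by rw [← mul_pow, ← huv]
  obtain ⟨V, hVv⟩ : IsUnit v := by
    rw [isUnit_iff_constantCoeff, hv, map_add, map_mul, map_pow, constantCoeff_X]
    simp
  have hV : (V : K⟦X⟧) = 1 + X ^ (k + 1) * (V : K⟦X⟧) ^ (k + 1) := by rw [hVv]; exact hv
  rw [huv, ← hVv, LaurentSeries.coe_X_mul_units_zpow]
  nth_rewrite 1 [← sub_add_cancel d j]
  rw [HahnSeries.coeff_single_mul_add, one_mul, PowerSeries.coeff_coe,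
    (isPowerCoeffTable_coeff_zpow hV).apply_eq isPowerCoeffTable_lambertTable _ hj hlo hhi]

theorem coeff_uhat_inv_pow_general (k : ℕ) (hk : 1 ≤ k) (u : PowerSeries ℚ)
    (heq : u = X + X * u ^ (k + 1)) :
    ((((u : LaurentSeries ℚ)) ^ (-(k : ℤ))).coeff (-(k : ℤ)) = 1) ∧
      (∀ l : ℕ, (((u : LaurentSeries ℚ)) ^ (-(k : ℤ))).coeff (((k : ℤ) + 1) * l + 1) =
        -((k : ℚ) / (l + 1) * (((k + 1) * l).choose l : ℚ))) ∧
      (∀ d : ℤ, d ≠ -(k : ℤ) → (∀ l : ℕ, d ≠ ((k : ℤ) + 1) * l + 1) →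
        (((u : LaurentSeries ℚ)) ^ (-(k : ℤ))).coeff d = 0) := by
  have hcoeff (d : ℤ) := coeff_zpow_of_eq_X_add_X_mul_pow heq (j := -k) (by omega) le_rfl
    (by omega) d
  simp only [sub_neg_eq_add] at hcoeff
  refine ⟨?_, fun l => ?_, fun d hd hdl => ?_⟩
  · rw [hcoeff, if_neg (by simp), neg_add_cancel, Int.natAbs_zero, ← mul_zero (k + 1),
      lambertTable_mul, lambertCoeff_zero_right (by omega)]
  · rw [hcoeff, show ((k : ℤ) + 1) * l + 1 + k = ((k + 1) * (l + 1) : ℕ) by push_cast; ring,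
      if_neg (by omega), Int.natAbs_natCast, lambertTable_mul, lambertCoeff_neg_self_succ]
  · rw [hcoeff]
    split_ifs with hneg
    · rfl
    refine lambertTable_of_not_dvd fun ⟨m, hm⟩ => ?_
    have hdm : d + k = ((k + 1) * m : ℕ) := by rw [← hm, Int.natAbs_of_nonneg (by omega)]
    cases m with
    | zero => exact hd (by push_cast at hdm; linarith)
    | succ l => exact hdl l (by push_cast at hdm; linarith)

/-- In the field of formal Laurent series over ℚ, the solution `û` of `û = z + z·û^(k+1)`
satisfies `û^(−k) = z^(−k) − z·Σ_{λ≥0} (k/(λ+1))·binomial((k+1)λ, λ)·z^((k+1)λ)`,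
stated coefficientwise. -/
theorem coeff_uhat_inv_pow (k : ℕ) (hk : 1 ≤ k) (u : PowerSeries ℚ)
    (h0 : constantCoeff u = 0)
    (heq : u = X + X * u ^ (k + 1)) :
    ((((u : LaurentSeries ℚ)) ^ (-(k : ℤ))).coeff (-(k : ℤ)) = 1) ∧
      (∀ l : ℕ, (((u : LaurentSeries ℚ)) ^ (-(k : ℤ))).coeff (((k : ℤ) + 1) * l + 1) =
        -((k : ℚ) / (l + 1) * (((k + 1) * l).choose l : ℚ))) ∧
      (∀ d : ℤ, d ≠ -(k : ℤ) → (∀ l : ℕ, d ≠ ((k : ℤ) + 1) * l + 1) →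
        (((u : LaurentSeries ℚ)) ^ (-(k : ℤ))).coeff d = 0) :=
  coeff_uhat_inv_pow_general k hk u heq
end

section
/- For k = 1 (ordinary Dyck paths) and N ≥ s ≥ 1, the sum over all Dyck paths of length 2N of the height reached after the s-th up-step equals s/(N+1) · binomial(2N, N) − Σ_{i=1}^{s−1} (s−i) · Catalan(i) · Catalan(N−i), where Catalan(m) = (1/(m+1))·binomial(2m, m). -/
open Finset

/-- The number of down-steps of `f` occurring before the `s`-th up-step
(i.e. down-steps preceded by fewer than `s` up-steps). -/
def downsBefore (n : ℕ) (f : Fin n → Bool) (s : ℕ) : ℕ :=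
  (Finset.univ.filter (fun i : Fin n =>
    f i = false ∧ (Finset.univ.filter (fun j : Fin n => j < i ∧ f j = true)).card < s)).card

/-- The level at which the `s`-th up-step starts (the `s`-th min-turn level). -/
def minTurn (k n : ℕ) (f : Fin n → Bool) (s : ℕ) : ℚ :=
  (k : ℚ) * ((s : ℚ) - 1) - downsBefore n f s

/-- The level at which the `s`-th up-step ends (the `s`-th max-turn level). -/
def maxTurn (k n : ℕ) (f : Fin n → Bool) (s : ℕ) : ℚ :=
  (k : ℚ) * (s : ℚ) - downsBefore n f s



namespace CMT
open DyckStep DyckWord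

/-- downs before the s-th U in a list of steps -/
def db : List DyckStep → ℕ → ℕ
  | _, 0 => 0
  | [], _ + 1 => 0
  | (U :: t), (s + 1) => db t s
  | (D :: t), (s + 1) => db t (s + 1) + 1

@[simp] lemma db_zero (l : List DyckStep) : db l 0 = 0 := by
  cases l with
  | nil => rfl
  | cons h t => cases h <;> rfl
@[simp] lemma db_nil (s : ℕ) : db [] s = 0 := by cases s <;> rfl
@[simp] lemma db_U (t : List DyckStep) (s : ℕ) : db (U :: t) (s+1) = db t s := rfl
@[simp] lemma db_D (t : List DyckStep) (s : ℕ) : db (D :: t) (s+1) = db t (s+1) + 1 := rfl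

lemma db_append (l1 l2 : List DyckStep) (s : ℕ) :
    db (l1 ++ l2) s = if s ≤ l1.count U then db l1 s
      else l1.count D + db l2 (s - l1.count U) := by
  induction l1 generalizing s with
  | nil =>
    cases s with
    | zero => simp
    | succ t => simp
  | cons hd tl ih =>
    cases s with
    | zero => simp
    | succ t =>
      rcases hd.dichotomy with h | h <;> subst h
      · rw [List.cons_append, db_U, ih, List.count_cons_self, List.count_cons_of_ne (by simp)]
        by_cases htc : t ≤ tl.count U
        · rw [if_pos htc, if_pos (by omega), db_U]
        · rw [if_neg htc, if_neg (by omega)]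
          have e : t + 1 - (tl.count U + 1) = t - tl.count U := by omega
          rw [e]
      · rw [List.cons_append, db_D, ih, List.count_cons_self, List.count_cons_of_ne (by simp)]
        by_cases htc : t + 1 ≤ tl.count U
        · rw [if_pos htc, if_pos htc, db_D]
        · rw [if_neg htc, if_neg htc]
          omega

noncomputable def cq (n : ℕ) : ℚ := catalan n

lemma cq_nonneg (n : ℕ) : 0 ≤ cq n := by unfold cq; positivity

@[simp] lemma cq_zero : cq 0 = 1 := by simp [cq]
@[simp] lemma cq_one : cq 1 = 1 := by simp [cq, catalan_one]

/-- Catalan convolution. -/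
lemma cq_conv (M : ℕ) : ∑ j ∈ range (M+1), cq j * cq (M - j) = cq (M+1) := by
  rw [cq, catalan_succ]
  push_cast
  rw [Fin.sum_univ_eq_sum_range (fun i => (catalan i : ℚ) * catalan (M - i))]
  rfl

lemma cq_rec (t : ℕ) : ((t:ℚ)+2) * cq (t+1) = 2*(2*(t:ℚ)+1) * cq t := by
  have h1 : ((t:ℚ)+1) * (Nat.centralBinom (t+1) : ℚ)
      = 2*(2*(t:ℚ)+1) * (Nat.centralBinom t : ℚ) := by
    exact_mod_cast congrArg (fun n : ℕ => (n : ℚ)) (Nat.succ_mul_centralBinom_succ t)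
  have h2 : ((t:ℚ)+2) * cq (t+1) = (Nat.centralBinom (t+1) : ℚ) := by
    simp only [cq]
    exact_mod_cast congrArg (fun n : ℕ => (n : ℚ)) (succ_mul_catalan_eq_centralBinom (t+1))
  have h3 : ((t:ℚ)+1) * cq t = (Nat.centralBinom t : ℚ) := by
    simp only [cq]
    exact_mod_cast congrArg (fun n : ℕ => (n : ℚ)) (succ_mul_catalan_eq_centralBinom t)
  have ht : ((t:ℚ)+1) ≠ 0 := by positivity
  apply mul_left_cancel₀ ht
  calc ((t:ℚ)+1) * (((t:ℚ)+2) * cq (t+1))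
      = ((t:ℚ)+1) * (Nat.centralBinom (t+1) : ℚ) := by rw [h2]
    _ = 2*(2*(t:ℚ)+1) * (Nat.centralBinom t : ℚ) := h1
    _ = ((t:ℚ)+1) * (2*(2*(t:ℚ)+1) * cq t) := by rw [← h3]; ring

/-- weighted Catalan convolution -/
lemma cq_wconv (t : ℕ) : ∑ i ∈ range (t+1), ((i:ℚ)+1) * cq i * cq (t - i) = (2*(t:ℚ)+1) * cq t := by
  have hrefl := Finset.sum_range_reflect (fun i => ((i:ℚ)+1) * cq i * cq (t - i)) (t+1)
  have step : ∀ j ∈ range (t+1), ((((t+1-1-j:ℕ)):ℚ)+1) * cq (t+1-1-j) * cq (t - (t+1-1-j)) =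
      ((t:ℚ)-(j:ℚ)+1) * cq (t-j) * cq j := by
    intro j hj
    rw [mem_range] at hj
    have hj' : j ≤ t := by omega
    have e1 : t+1-1-j = t - j := by omega
    have e2 : t - (t - j) = j := by omega
    rw [e1, e2, Nat.cast_sub hj']
  rw [Finset.sum_congr rfl step] at hrefl
  have key : (2:ℚ) * ∑ i ∈ range (t+1), ((i:ℚ)+1) * cq i * cq (t - i)
      = ((t:ℚ)+2) * ∑ i ∈ range (t+1), cq i * cq (t - i) := by
    rw [two_mul]
    nth_rewrite 1 [← hrefl]
    rw [← Finset.sum_add_distrib, Finset.mul_sum]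
    apply Finset.sum_congr rfl
    intro i hi
    ring
  rw [cq_conv] at key
  have := cq_rec t
  linarith


noncomputable def psi (n s : ℕ) : ℚ :=
  ∑ i ∈ range (s-1), ((s:ℚ) - ((i:ℚ)+1)) * cq (i+1) * cq (n-1-i)

lemma amp_core (t : ℕ) :
    cq (t+1) + ∑ i ∈ range t, (i:ℚ) * cq i * cq (t-i) = ((t:ℚ)+1) * cq t := by
  have h1 := cq_conv t
  have h2 := cq_wconv t
  have e1 : ∑ i ∈ range (t+1), (i:ℚ) * cq i * cq (t-i)
      = (2*(t:ℚ)+1) * cq t - cq (t+1) := by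
    have hsplit : ∀ i ∈ range (t+1), (i:ℚ)*cq i*cq (t-i)
        = ((i:ℚ)+1)*cq i*cq (t-i) - cq i * cq (t-i) := fun i _ => by ring
    rw [Finset.sum_congr rfl hsplit, Finset.sum_sub_distrib, h2, h1]
  have e2 : ∑ i ∈ range (t+1), (i:ℚ) * cq i * cq (t-i)
      = (∑ i ∈ range t, (i:ℚ) * cq i * cq (t-i)) + (t:ℚ) * cq t * cq (t-t) := by
    rw [Finset.sum_range_succ]
  rw [Nat.sub_self, cq_zero] at e2
  have := e2.symm.trans e1
  linarith

/-- drop/add a final zero term to convert `range (t-1)` sums to `range t` sums -/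
lemma sum_range_pred {f : ℕ → ℚ} (t : ℕ) (h : t ≠ 0 → f (t-1) = 0) :
    ∑ i ∈ range (t-1), f i = ∑ i ∈ range t, f i := by
  cases t with
  | zero => rfl
  | succ t' =>
    have h' : f t' = 0 := by simpa using h (by simp)
    rw [Finset.sum_range_succ, h', add_zero, Nat.add_sub_cancel]

lemma conv_tail (M a : ℕ) (ha : a ≤ M + 1) :
    ∑ u ∈ range (M+1-a), cq (a+u) * cq (M-(a+u))
      = cq (M+1) - ∑ v ∈ range a, cq v * cq (M-v) := by
  have h := Finset.sum_range_add (fun j => cq j * cq (M - j)) a (M+1-a)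
  rw [show a + (M+1-a) = M+1 by omega, cq_conv] at h
  
  linarith

/-- the key identity -/
lemma amp (m : ℕ) : ∀ t, t ≤ m →
    (∑ j ∈ range t, cq (j+1) * cq (m-j))
      + ∑ i ∈ range (t-1), (i:ℚ) * cq i * (∑ j ∈ range (t-1-i), cq (j+1) * cq (m-1-i-j))
    = ∑ i ∈ range t, ((i:ℚ)+1) * cq i * cq (m-i) := by
  intro t
  induction t with
  | zero => simp
  | succ t ih =>
    intro htm
    have ih' := ih (by omega)
    have hext : ∑ i ∈ range (t-1), (i:ℚ) * cq i * (∑ j ∈ range (t-1-i), cq (j+1) * cq (m-1-i-j))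
        = ∑ i ∈ range t, (i:ℚ) * cq i * (∑ j ∈ range (t-1-i), cq (j+1) * cq (m-1-i-j)) := by
      apply sum_range_pred
      intro ht
      rw [show t-1-(t-1) = 0 by omega]
      simp
    rw [hext] at ih'
    have hsplit : ∀ i ∈ range t,
        (i:ℚ) * cq i * (∑ j ∈ range (t-i), cq (j+1) * cq (m-1-i-j))
        = (i:ℚ) * cq i * (∑ j ∈ range (t-1-i), cq (j+1) * cq (m-1-i-j))
          + ((i:ℚ) * cq i * cq (t-i)) * cq (m-t) := by
      intro i hi
      rw [mem_range] at hi
      rw [show t-i = (t-1-i)+1 by omega, Finset.sum_range_succ,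
        show t-1-i+1 = t-i by omega, show m-1-i-(t-1-i) = m-t by omega]
      ring
    rw [Nat.succ_sub_one, Finset.sum_range_succ _ t, Finset.sum_range_succ _ t,
      Finset.sum_congr rfl hsplit, Finset.sum_add_distrib, ← Finset.sum_mul]
    have core := amp_core t
    have : cq (t+1) * cq (m-t) + (∑ i ∈ range t, (i:ℚ) * cq i * cq (t-i)) * cq (m-t)
        = (((t:ℚ)+1) * cq t) * cq (m-t) := by
      rw [← add_mul, core]
    linarith [ih']

lemma psi_rec (n t : ℕ) (htn : t ≤ n) :
    psi (n+1) (t+1)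
      = (∑ i ∈ Finset.Ico t (n+1), cq (n-i) * psi i t)
        + ∑ i ∈ range t, (((i:ℚ)+1) * cq i * cq (n-i) + cq i * psi (n-i) (t-i)) := by
  have hpsi : psi (n+1) (t+1)
      = ∑ j ∈ range t, (((t:ℚ)+1) - ((j:ℚ)+1)) * cq (j+1) * cq (n-j) := by
    unfold psi
    rw [Nat.add_sub_cancel]
    refine Finset.sum_congr rfl fun j hj => ?_
    rw [show n+1-1-j = n-j from by omega]
    push_cast
    ring
  have hE1 : ∑ i ∈ Finset.Ico t (n+1), cq (n-i) * psi i t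
      = (∑ j ∈ range (t-1), ((t:ℚ)-((j:ℚ)+1)) * cq (j+1) * cq (n-j))
        - ∑ j ∈ range (t-1), ((t:ℚ)-((j:ℚ)+1)) * cq (j+1)
            * (∑ v ∈ range (t-1-j), cq v * cq (n-1-j-v)) := by
    rw [Finset.sum_Ico_eq_sum_range]
    have step1 : ∀ u ∈ range (n+1-t), cq (n-(t+u)) * psi (t+u) t
        = ∑ j ∈ range (t-1), ((t:ℚ)-((j:ℚ)+1)) * cq (j+1)
            * (cq ((t-1-j)+u) * cq ((n-1-j) - ((t-1-j)+u))) := by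
      intro u hu
      rw [mem_range] at hu
      unfold psi
      rw [Finset.mul_sum]
      refine Finset.sum_congr rfl fun j hj => ?_
      rw [mem_range] at hj
      rw [show (t+u)-1-j = (t-1-j)+u from by omega,
        show n-(t+u) = (n-1-j) - ((t-1-j)+u) from by omega]
      ring
    rw [Finset.sum_congr rfl step1, Finset.sum_comm, ← Finset.sum_sub_distrib]
    refine Finset.sum_congr rfl fun j hj => ?_
    rw [mem_range] at hj
    rw [← Finset.mul_sum, show n+1-t = (n-1-j)+1 - (t-1-j) from by omega,
      conv_tail (n-1-j) (t-1-j) (by omega), show (n-1-j)+1 = n-j from by omega]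
    ring
  have hE3 : ∑ i ∈ range t, cq i * psi (n-i) (t-i)
      = ∑ i ∈ range (t-1), ∑ j ∈ range (t-1-i),
          (((t:ℚ)-(i:ℚ))-((j:ℚ)+1)) * cq i * cq (j+1) * cq (n-1-i-j) := by
    rw [sum_range_pred (f := fun i => ∑ j ∈ range (t-1-i),
        (((t:ℚ)-(i:ℚ))-((j:ℚ)+1)) * cq i * cq (j+1) * cq (n-1-i-j)) t
      (fun ht => by simp [show t-1-(t-1) = 0 from by omega])]
    refine Finset.sum_congr rfl fun i hi => ?_
    rw [mem_range] at hi
    unfold psi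
    rw [Finset.mul_sum, show t-i-1 = t-1-i from by omega]
    refine Finset.sum_congr rfl fun j hj => ?_
    rw [mem_range] at hj
    rw [show n-i-1-j = n-1-i-j from by omega, Nat.cast_sub (by omega : i ≤ t)]
    ring
  have hswap : ∑ j ∈ range (t-1), ((t:ℚ)-((j:ℚ)+1)) * cq (j+1)
        * (∑ v ∈ range (t-1-j), cq v * cq (n-1-j-v))
      = ∑ i ∈ range (t-1), ∑ j ∈ range (t-1-i),
          ((t:ℚ)-((j:ℚ)+1)) * cq i * cq (j+1) * cq (n-1-i-j) := by
    have e1 : ∀ j ∈ range (t-1), ((t:ℚ)-((j:ℚ)+1)) * cq (j+1)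
          * (∑ v ∈ range (t-1-j), cq v * cq (n-1-j-v))
        = ∑ v ∈ range (t-1-j), ((t:ℚ)-((j:ℚ)+1)) * cq v * cq (j+1) * cq (n-1-j-v) := by
      intro j hj
      rw [Finset.mul_sum]
      exact Finset.sum_congr rfl fun v hv => by ring
    rw [Finset.sum_congr rfl e1]
    rw [Finset.sum_comm' (s' := fun v => range (t-1-v)) (t' := range (t-1))
      (fun x y => by simp only [mem_range]; omega)]
    refine Finset.sum_congr rfl fun i hi => Finset.sum_congr rfl fun j hj => ?_
    rw [show n-1-j-i = n-1-i-j from by omega]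
  have hcomb : ∑ i ∈ range t, cq i * psi (n-i) (t-i)
        + ∑ i ∈ range (t-1), (i:ℚ) * cq i * (∑ j ∈ range (t-1-i), cq (j+1) * cq (n-1-i-j))
      = ∑ j ∈ range (t-1), ((t:ℚ)-((j:ℚ)+1)) * cq (j+1)
          * (∑ v ∈ range (t-1-j), cq v * cq (n-1-j-v)) := by
    rw [hE3, hswap, ← Finset.sum_add_distrib]
    refine Finset.sum_congr rfl fun i hi => ?_
    rw [Finset.mul_sum, ← Finset.sum_add_distrib]
    refine Finset.sum_congr rfl fun j hj => ?_
    ring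
  have hT1a : ∑ j ∈ range (t-1), ((t:ℚ)-((j:ℚ)+1)) * cq (j+1) * cq (n-j)
      = ∑ j ∈ range t, ((t:ℚ)-((j:ℚ)+1)) * cq (j+1) * cq (n-j) := by
    apply sum_range_pred
    intro ht
    rw [Nat.cast_sub (by omega : 1 ≤ t)]
    ring
  have hpsiA : psi (n+1) (t+1)
      = (∑ j ∈ range t, ((t:ℚ)-((j:ℚ)+1)) * cq (j+1) * cq (n-j))
        + ∑ j ∈ range t, cq (j+1) * cq (n-j) := by
    rw [hpsi, ← Finset.sum_add_distrib]
    exact Finset.sum_congr rfl fun j hj => by ring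
  have hamp := amp n t htn
  rw [Finset.sum_add_distrib]
  rw [hE1, hpsiA, ← hT1a]
  linarith [hamp, hcomb]

lemma sum_decomp (n : ℕ) (g : DyckWord → ℚ) :
    ∑ p : {p : DyckWord // p.semilength = n + 1}, g p.1 =
      ∑ i ∈ range (n+1), ∑ q : {p : DyckWord // p.semilength = i},
        ∑ r : {p : DyckWord // p.semilength = n - i}, g (q.1.nest + r.1) := by
  have hne : ∀ p : {p : DyckWord // p.semilength = n+1}, p.1 ≠ 0 := by
    intro p h0
    have h2 := p.2
    rw [h0] at h2
    simp at h2
  have hmap : ∀ p ∈ (univ : Finset {p : DyckWord // p.semilength = n+1}),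
      p.1.insidePart.semilength ∈ range (n+1) := by
    intro p _
    rw [mem_range]
    have := semilength_insidePart_lt (hne p)
    omega
  rw [← Finset.sum_fiberwise_of_maps_to hmap (fun p => g p.1)]
  refine Finset.sum_congr rfl fun i hi => ?_
  rw [mem_range] at hi
  have hprod : (∑ x : {p : DyckWord // p.semilength = i} × {p : DyckWord // p.semilength = n - i},
      g (x.1.1.nest + x.2.1)) = ∑ q : {p : DyckWord // p.semilength = i},
        ∑ r : {p : DyckWord // p.semilength = n - i}, g (q.1.nest + r.1) :=
    Fintype.sum_prod_type _
  rw [← hprod]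
  refine Finset.sum_bij'
    (fun p hp => ((⟨p.1.insidePart, (Finset.mem_filter.mp hp).2⟩ :
        {p : DyckWord // p.semilength = i}),
      (⟨p.1.outsidePart, by
        have h1 := semilength_insidePart_add_semilength_outsidePart_add_one (hne p)
        have h2 := (Finset.mem_filter.mp hp).2
        have h3 := p.2
        omega⟩ : {p : DyckWord // p.semilength = n - i})))
    (fun x _ => (⟨x.1.1.nest + x.2.1, by
        rw [semilength_add, semilength_nest, x.1.2, x.2.2]
        omega⟩ : {p : DyckWord // p.semilength = n+1}))
    (fun p hp => Finset.mem_univ _)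
    (fun x hx => by
      rw [Finset.mem_filter]
      refine ⟨Finset.mem_univ _, ?_⟩
      have h1 : (x.1.1.nest + x.2.1).insidePart = x.1.1 := by
        rw [insidePart_add nest_ne_zero, insidePart_nest]
      simp only [h1, x.1.2])
    (fun p hp => by
      apply Subtype.ext
      exact nest_insidePart_add_outsidePart (hne p))
    (fun x hx => by
      refine Prod.ext ?_ ?_
      · apply Subtype.ext
        simp only
        rw [insidePart_add nest_ne_zero, insidePart_nest]
      · apply Subtype.ext
        simp only
        rw [outsidePart_add nest_ne_zero, outsidePart_nest, zero_add])
    (fun p hp => by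
      simp only
      rw [nest_insidePart_add_outsidePart (hne p)])

lemma card_dw (n : ℕ) : ((Fintype.card {p : DyckWord // p.semilength = n}) : ℚ) = cq n := by
  rw [card_dyckWord_semilength_eq_catalan]; rfl

lemma count_U_toList (p : DyckWord) : p.toList.count U = p.semilength := rfl

lemma db_nest_add (q r : DyckWord) (t : ℕ) :
    db (q.nest + r).toList (t+1) =
      if t ≤ q.semilength then db q.toList t
      else q.semilength + 1 + db r.toList (t - q.semilength) := by
  have hl : (q.nest + r).toList = U :: ((q.toList ++ [D]) ++ r.toList) := by
    show ([U] ++ q.toList ++ [D]) ++ r.toList = _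
    simp
  rw [hl, db_U, db_append]
  have hcU : (q.toList ++ [D]).count U = q.semilength := by
    rw [List.count_append, count_U_toList]
    simp
  have hcD : (q.toList ++ [D]).count D = q.semilength + 1 := by
    rw [List.count_append, ← q.count_U_eq_count_D, count_U_toList]
    simp
  rw [hcU, hcD, db_append, count_U_toList]
  by_cases ht : t ≤ q.semilength
  · simp [ht]
  · simp [ht]

noncomputable def Wsum (n s : ℕ) : ℚ :=
  ∑ p : {p : DyckWord // p.semilength = n}, (db p.1.toList s : ℚ)

lemma Wsum_zero (n : ℕ) : Wsum n 0 = 0 := by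
  unfold Wsum
  simp

lemma Wsum_eq : ∀ n, ∀ s, s ≤ n → Wsum n s = psi n s := by
  intro n
  induction n using Nat.strong_induction_on with
  | _ n ih =>
    intro s hs
    cases s with
    | zero =>
      rw [Wsum_zero]
      unfold psi
      simp
    | succ t =>
      cases n with
      | zero => omega
      | succ m =>
        have hts : t ≤ m := by omega
        unfold Wsum
        rw [sum_decomp m (fun p => (db p.toList (t+1) : ℚ))]
        have hinner : ∀ i ∈ range (m+1),
            (∑ q : {p : DyckWord // p.semilength = i},
              ∑ r : {p : DyckWord // p.semilength = m - i},
                ((db ((q.1.nest + r.1)).toList (t+1) : ℕ) : ℚ))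
            = if t ≤ i then cq (m-i) * psi i t
              else ((i:ℚ)+1) * cq i * cq (m-i) + cq i * psi (m-i) (t-i) := by
          intro i hi
          rw [mem_range] at hi
          by_cases hti : t ≤ i
          · rw [if_pos hti]
            have hq : ∀ (a : {p : DyckWord // p.semilength = i})
                (b : {p : DyckWord // p.semilength = m - i}),
                ((db ((a.1.nest + b.1)).toList (t+1) : ℕ) : ℚ) = (db a.1.toList t : ℚ) := by
              intro a b
              rw [db_nest_add, a.2, if_pos hti]
            calc ∑ a : {p : DyckWord // p.semilength = i},
                  ∑ b : {p : DyckWord // p.semilength = m - i},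
                    ((db ((a.1.nest + b.1)).toList (t+1) : ℕ) : ℚ)
                = ∑ a : {p : DyckWord // p.semilength = i},
                  ∑ _b : {p : DyckWord // p.semilength = m - i}, (db a.1.toList t : ℚ) := by
                  exact Finset.sum_congr rfl fun a _ => Finset.sum_congr rfl fun b _ => hq a b
              _ = ∑ a : {p : DyckWord // p.semilength = i}, cq (m-i) * (db a.1.toList t : ℚ) := by
                  refine Finset.sum_congr rfl fun a _ => ?_
                  rw [Finset.sum_const, Finset.card_univ, nsmul_eq_mul, card_dw]
              _ = cq (m-i) * Wsum i t := by
                  rw [← Finset.mul_sum, Wsum]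
              _ = cq (m-i) * psi i t := by
                  rw [ih i (by omega) t hti]
          · rw [if_neg hti]
            push_neg at hti
            have hq : ∀ (a : {p : DyckWord // p.semilength = i})
                (b : {p : DyckWord // p.semilength = m - i}),
                ((db ((a.1.nest + b.1)).toList (t+1) : ℕ) : ℚ)
                  = ((i:ℚ)+1) + (db b.1.toList (t-i) : ℚ) := by
              intro a b
              rw [db_nest_add, a.2, if_neg (by omega)]
              push_cast
              ring
            calc ∑ a : {p : DyckWord // p.semilength = i},
                  ∑ b : {p : DyckWord // p.semilength = m - i},
                    ((db ((a.1.nest + b.1)).toList (t+1) : ℕ) : ℚ)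
                = ∑ _a : {p : DyckWord // p.semilength = i},
                  ∑ b : {p : DyckWord // p.semilength = m - i},
                    (((i:ℚ)+1) + (db b.1.toList (t-i) : ℚ)) := by
                  exact Finset.sum_congr rfl fun a _ => Finset.sum_congr rfl fun b _ => hq a b
              _ = ∑ _a : {p : DyckWord // p.semilength = i},
                    (cq (m-i) * ((i:ℚ)+1) + Wsum (m-i) (t-i)) := by
                  refine Finset.sum_congr rfl fun a _ => ?_
                  rw [Finset.sum_add_distrib, Finset.sum_const, Finset.card_univ, nsmul_eq_mul,
                    card_dw, Wsum]
              _ = cq i * (cq (m-i) * ((i:ℚ)+1) + Wsum (m-i) (t-i)) := by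
                  rw [Finset.sum_const, Finset.card_univ, nsmul_eq_mul, card_dw]
              _ = ((i:ℚ)+1) * cq i * cq (m-i) + cq i * psi (m-i) (t-i) := by
                  rw [ih (m-i) (by omega) (t-i) (by omega)]
                  ring
        rw [Finset.sum_congr rfl hinner]
        have hsplit : ∑ i ∈ range (m+1),
            (if t ≤ i then cq (m-i) * psi i t
              else ((i:ℚ)+1) * cq i * cq (m-i) + cq i * psi (m-i) (t-i))
            = (∑ i ∈ Finset.Ico t (m+1), cq (m-i) * psi i t)
              + ∑ i ∈ range t, (((i:ℚ)+1) * cq i * cq (m-i) + cq i * psi (m-i) (t-i)) := by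
          rw [range_eq_Ico, ← Finset.sum_Ico_consecutive _ (Nat.zero_le t) (by omega : t ≤ m+1)]
          rw [add_comm]
          congr 1
          · refine Finset.sum_congr rfl fun i hi => ?_
            rw [Finset.mem_Ico] at hi
            rw [if_pos hi.1]
          · rw [← range_eq_Ico]
            refine Finset.sum_congr rfl fun i hi => ?_
            rw [mem_range] at hi
            rw [if_neg (by omega)]
        rw [hsplit, ← psi_rec m t hts]

def toSteps (n : ℕ) (f : Fin n → Bool) : List DyckStep :=
  List.ofFn (fun i => if f i then U else D)

@[simp] lemma toSteps_length (n : ℕ) (f : Fin n → Bool) : (toSteps n f).length = n := by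
  simp [toSteps]

lemma toSteps_succ (n : ℕ) (f : Fin (n+1) → Bool) :
    toSteps (n+1) f = (if f 0 then U else D) :: toSteps n (f ∘ Fin.succ) := by
  simp [toSteps, List.ofFn_succ]

lemma toSteps_getElem (n : ℕ) (f : Fin n → Bool) (j : ℕ) (hj : j < n) :
    (toSteps n f)[j]'(by simpa using hj) = if f ⟨j, hj⟩ then U else D := by
  simp [toSteps]

/-- counting in prefixes matches pathHeight -/
lemma count_take (n : ℕ) (f : Fin n → Bool) (j : ℕ) (hj : j ≤ n) :
    (((toSteps n f).take j).count U : ℤ) - (((toSteps n f).take j).count D : ℤ)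
      = pathHeight 1 n f j := by
  induction j with
  | zero => simp [pathHeight]
  | succ j ih =>
    have hj' : j < n := hj
    have htake : (toSteps n f).take (j+1)
        = (toSteps n f).take j ++ [if f ⟨j, hj'⟩ then U else D] := by
      rw [List.take_succ]
      congr 1
      rw [List.getElem?_eq_getElem (by simpa using hj'), toSteps_getElem n f j hj']
      rfl
    have hph : pathHeight 1 n f (j+1) = pathHeight 1 n f j + stepVal 1 (f ⟨j, hj'⟩) := by
      unfold pathHeight
      rw [Finset.sum_range_succ, dif_pos hj']
    rw [htake, hph, ← ih (by omega)]
    cases hfj : f ⟨j, hj'⟩ <;> simp [stepVal, List.count_append] <;> ring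

lemma upsBefore_zero (n : ℕ) (f : Fin (n+1) → Bool) :
    (Finset.univ.filter (fun j : Fin (n+1) => j < 0 ∧ f j = true)).card = 0 := by
  simp [Finset.filter_eq_empty_iff]

lemma upsBefore_succ (n : ℕ) (f : Fin (n+1) → Bool) (i : Fin n) :
    (Finset.univ.filter (fun j : Fin (n+1) => j < i.succ ∧ f j = true)).card
      = (if f 0 = true then 1 else 0)
        + (Finset.univ.filter (fun j : Fin n => j < i ∧ f j.succ = true)).card := by
  rw [Finset.card_filter, Finset.card_filter, Fin.sum_univ_succ]
  congr 1
  · simp [Fin.succ_pos]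
  · refine Finset.sum_congr rfl fun j _ => ?_
    congr 1
    simp [Fin.succ_lt_succ_iff]

lemma downsBefore_zero' (n : ℕ) (f : Fin n → Bool) : downsBefore n f 0 = 0 := by
  simp [downsBefore]

lemma downsBefore_succ_true (n : ℕ) (f : Fin (n+1) → Bool) (h : f 0 = true) (s : ℕ) :
    downsBefore (n+1) f (s+1) = downsBefore n (f ∘ Fin.succ) s := by
  unfold downsBefore
  rw [Finset.card_filter, Finset.card_filter, Fin.sum_univ_succ]
  have h0 : (if f 0 = false ∧
      (Finset.univ.filter (fun j : Fin (n+1) => j < 0 ∧ f j = true)).card < s+1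
      then (1:ℕ) else 0) = 0 := by
    simp [h]
  rw [h0, zero_add]
  refine Finset.sum_congr rfl fun i _ => ?_
  congr 1
  rw [upsBefore_succ n f i]
  simp only [h, if_true, Function.comp_apply]
  rw [eq_iff_iff]
  exact and_congr_right fun _ => by omega

lemma downsBefore_succ_false (n : ℕ) (f : Fin (n+1) → Bool) (h : f 0 = false) (s : ℕ) :
    downsBefore (n+1) f (s+1) = downsBefore n (f ∘ Fin.succ) (s+1) + 1 := by
  unfold downsBefore
  rw [Finset.card_filter, Finset.card_filter, Fin.sum_univ_succ]
  have h0 : (if f 0 = false ∧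
      (Finset.univ.filter (fun j : Fin (n+1) => j < 0 ∧ f j = true)).card < s+1
      then (1:ℕ) else 0) = 1 := by
    have : (Finset.univ.filter (fun j : Fin (n+1) => j < 0 ∧ f j = true)) = ∅ := by
      apply Finset.filter_eq_empty_iff.mpr
      intro j _
      simp
    simp [h, this]
  rw [h0, add_comm 1]
  congr 1
  refine Finset.sum_congr rfl fun i _ => ?_
  congr 1
  rw [upsBefore_succ n f i]
  simp only [h, Function.comp_apply]
  norm_num

lemma db_toSteps (n : ℕ) (f : Fin n → Bool) (s : ℕ) :
    db (toSteps n f) s = downsBefore n f s := by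
  induction n generalizing s with
  | zero =>
    have : toSteps 0 f = [] := by simp [toSteps]
    rw [this, db_nil]
    simp [downsBefore]
  | succ n ihn =>
    rw [toSteps_succ]
    cases s with
    | zero => rw [db_zero, downsBefore_zero']
    | succ t =>
      cases hf0 : f 0 with
      | true =>
        rw [if_pos rfl, db_U, ihn, downsBefore_succ_true n f hf0]
      | false =>
        rw [if_neg (by simp), db_D, ihn, downsBefore_succ_false n f hf0]

lemma count_U_add_count_D (l : List DyckStep) : l.count U + l.count D = l.length := by
  induction l with
  | nil => simp
  | cons h t ih =>
    rcases h.dichotomy with h | h <;> subst h <;>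
      simp [List.count_cons, List.count_cons] <;> omega

lemma take_all (n : ℕ) (f : Fin n → Bool) : (toSteps n f).take n = toSteps n f := by
  apply List.take_of_length_le
  simp

def mkWord (n : ℕ) (f : Fin n → Bool) (hf : IsDyckPath 1 n f) : DyckWord where
  toList := toSteps n f
  count_U_eq_count_D := by
    have h := count_take n f n le_rfl
    rw [take_all] at h
    have := hf.2
    omega
  count_D_le_count_U := by
    intro i
    by_cases hi : i ≤ n
    · have h := count_take n f i hi
      have := hf.1 i hi
      omega
    · rw [List.take_of_length_le (by simp; omega)]
      have h := count_take n f n le_rfl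
      rw [take_all] at h
      have := hf.2
      omega

lemma mkWord_semilength (N : ℕ) (f : Fin (2*N) → Bool) (hf : IsDyckPath 1 (2*N) f) :
    (mkWord (2*N) f hf).semilength = N := by
  have h1 : (mkWord (2*N) f hf).toList = toSteps (2*N) f := rfl
  have h2 := (mkWord (2*N) f hf).count_U_eq_count_D
  have h3 := count_U_add_count_D (toSteps (2*N) f)
  rw [toSteps_length] at h3
  rw [DyckWord.semilength, h1]
  rw [h1] at h2
  omega

def fromWord (n : ℕ) (p : DyckWord) : Fin n → Bool := fun i => decide (p.toList.getD i D = U)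

lemma toSteps_fromWord (n : ℕ) (p : DyckWord) (hlen : p.toList.length = n) :
    toSteps n (fromWord n p) = p.toList := by
  apply List.ext_getElem (by simp [hlen])
  intro j h1 h2
  rw [toSteps_getElem n _ j (by simpa using h1)]
  unfold fromWord
  have hg : p.toList.getD (↑(⟨j, by simpa using h1⟩ : Fin n)) D = p.toList[j]'h2 := by
    simp [List.getD_eq_getElem?_getD, List.getElem?_eq_getElem h2]
  rw [hg]
  rcases (p.toList[j]'h2).dichotomy with hU | hD
  · simp [hU]
  · simp [hD]

lemma fromWord_mkWord (n : ℕ) (f : Fin n → Bool) (hf : IsDyckPath 1 n f) :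
    fromWord n (mkWord n f hf) = f := by
  funext i
  show decide ((toSteps n f).getD i D = U) = f i
  have hi : (i : ℕ) < (toSteps n f).length := by simp [i.isLt]
  have hg : (toSteps n f).getD i D = if f i then U else D := by
    have h2 : (toSteps n f)[(i:ℕ)]'hi = if f i then U else D := by
      rw [toSteps_getElem n f i i.isLt]
    simp [List.getD_eq_getElem?_getD, List.getElem?_eq_getElem hi, h2]
  cases hfi : f i <;> simp [hg, hfi, toSteps_getElem n f (↑i) i.isLt, Fin.eta]

lemma isDyckPath_fromWord (N : ℕ) (p : DyckWord) (hsl : p.semilength = N) :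
    IsDyckPath 1 (2*N) (fromWord (2*N) p) := by
  have hlen : p.toList.length = 2*N := by
    rw [← p.two_mul_semilength_eq_length, hsl]
  have hts := toSteps_fromWord (2*N) p hlen
  constructor
  · intro j hj
    have h := count_take (2*N) (fromWord (2*N) p) j hj
    rw [hts] at h
    have := p.count_D_le_count_U j
    omega
  · have h := count_take (2*N) (fromWord (2*N) p) (2*N) le_rfl
    rw [take_all, hts] at h
    have := p.count_U_eq_count_D
    omega

end CMT

/-- For ordinary Dyck paths (`k = 1`): the sum over all Dyck paths of length `2N` of the
height reached after the `s`-th up-step equals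
`s/(N+1)·binomial(2N,N) − Σ_{i=1}^{s−1} (s−i)·Catalan(i)·Catalan(N−i)`. -/
theorem cumulative_maxTurn_dyck (N s : ℕ) (hs : 1 ≤ s) (hsN : s ≤ N) :
    ∑ f ∈ dyckPaths 1 (2 * N), maxTurn 1 (2 * N) f s =
      (s : ℚ) / (N + 1) * ((2 * N).choose N : ℚ) -
        ∑ i ∈ Finset.Icc 1 (s - 1), ((s : ℚ) - i) *
          (((2 * i).choose i : ℚ) / (i + 1)) *
          (((2 * (N - i)).choose (N - i) : ℚ) / (N - i + 1)) := by
  classical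
  have hbij : ∑ f ∈ dyckPaths 1 (2 * N), maxTurn 1 (2 * N) f s
      = ∑ p : {p : DyckWord // p.semilength = N},
          ((s:ℚ) - (CMT.db p.1.toList s : ℚ)) := by
    refine Finset.sum_bij'
      (fun f hf => (⟨CMT.mkWord (2*N) f ((Finset.mem_filter.mp hf).2),
        CMT.mkWord_semilength N f ((Finset.mem_filter.mp hf).2)⟩ :
          {p : DyckWord // p.semilength = N}))
      (fun p _ => CMT.fromWord (2*N) p.1) (fun f hf => Finset.mem_univ _) ?_ ?_ ?_ ?_
    · intro p _
      rw [dyckPaths, Finset.mem_filter]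
      exact ⟨Finset.mem_univ _, CMT.isDyckPath_fromWord N p.1 p.2⟩
    · intro f hf
      exact CMT.fromWord_mkWord (2*N) f ((Finset.mem_filter.mp hf).2)
    · intro p _
      apply Subtype.ext
      apply DyckWord.ext
      show CMT.toSteps (2*N) (CMT.fromWord (2*N) p.1) = p.1.toList
      apply CMT.toSteps_fromWord
      rw [← p.1.two_mul_semilength_eq_length, p.2]
    · intro f hf
      show maxTurn 1 (2*N) f s = _
      unfold maxTurn
      have hd : CMT.db (CMT.mkWord (2*N) f ((Finset.mem_filter.mp hf).2)).toList s
          = downsBefore (2*N) f s := CMT.db_toSteps (2*N) f s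
      rw [hd]
      push_cast
      ring
  rw [hbij, Finset.sum_sub_distrib, Finset.sum_const, Finset.card_univ, nsmul_eq_mul,
    CMT.card_dw]
  have hW : (∑ p : {p : DyckWord // p.semilength = N}, (CMT.db p.1.toList s : ℚ))
      = CMT.Wsum N s := rfl
  rw [hW, CMT.Wsum_eq N s hsN]
  have hcq : ∀ n : ℕ, CMT.cq n = ((2*n).choose n : ℚ) / ((n:ℚ)+1) := by
    intro n
    have h' : ((n:ℚ)+1) * CMT.cq n = ((2*n).choose n : ℚ) := by
      rw [CMT.cq]
      exact_mod_cast congrArg (fun k : ℕ => (k:ℚ)) (succ_mul_catalan_eq_centralBinom n)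
    rw [eq_div_iff (by positivity : ((n:ℚ)+1) ≠ 0)]
    linarith
  have hRHS : ∑ i ∈ Finset.Icc 1 (s - 1), ((s : ℚ) - i) *
        (((2 * i).choose i : ℚ) / (i + 1)) *
        (((2 * (N - i)).choose (N - i) : ℚ) / (N - i + 1)) = CMT.psi N s := by
    rw [show Finset.Icc 1 (s-1) = Finset.Ico 1 s from by
      rw [← Finset.Ico_add_one_right_eq_Icc, show s-1+1 = s from by omega]]
    rw [Finset.sum_Ico_eq_sum_range]
    unfold CMT.psi
    refine Finset.sum_congr rfl fun i hi => ?_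
    rw [Finset.mem_range] at hi
    have h1 : 1 + i ≤ s - 1 := by omega
    have h2 : 1 + i ≤ N - 1 := by omega
    have e1 : (2*(1+i)).choose (1+i) = (2*(i+1)).choose (i+1) := by rw [Nat.add_comm 1 i]
    have e2 : N - (1+i) = N-1-i := by omega
    have e3 : ((N-1-i : ℕ):ℚ) = (N:ℚ) - 1 - (i:ℚ) := by
      rw [show N-1-i = (N-1)-i from rfl, Nat.cast_sub (by omega : i ≤ N-1),
        Nat.cast_sub (by omega : 1 ≤ N)]
      push_cast
      ring
    rw [e1, e2, hcq (i+1), hcq (N-1-i), e3]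
    push_cast
    ring_nf
  rw [hRHS, hcq N]
  ring
end
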